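/- arXiv:0904.2925 — 4 statements merged into one kernel-verified Lean document; each statement's English description precedes it below -/
import Mathlib

section
/- Let ω : ℕ → A be an infinite word over a finite alphabet A. Then the abelian complexity function ρ^ab_ω is bounded (i.e., there exists M such that ρ^ab_ω(n) ≤ M for all n) if and only if ω is C-balanced for some positive integer C. -/
/-- The factor of the infinite word `ω` of length `n` starting at position `i`. -/
def factor {A : Type*} (ω : ℕ → A) (i n : ℕ) : List A :=
  (List.range n).map fun j => ω (i + j)

/-- The abelian complexity of `ω`: the number of abelian equivalence classes of
factors of `ω` of length `n`. -/
noncomputable def abelianComplexity {A : Type*} [DecidableEq A] (ω : ℕ → A) (n : ℕ) : ℕ :=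
  Set.ncard {c : A → ℕ | ∃ i : ℕ, c = fun a => (factor ω i n).count a}

/-- `ω` is `C`-balanced: for every letter `a` and all factors of equal length,
the numbers of occurrences of `a` differ by at most `C`. -/
def IsCBalanced {A : Type*} [DecidableEq A] (ω : ℕ → A) (C : ℕ) : Prop :=
  ∀ a : A, ∀ n i j : ℕ,
    |((factor ω i n).count a : ℤ) - ((factor ω j n).count a : ℤ)| ≤ (C : ℤ)

/-!
Sliding a window of length `n` one step along `ω` changes the number of occurrences of
each letter by at most one, so, for a fixed letter `a`, the values of `|factor ω i n|_a`
form an interval of integers. Hence the spread of these values is less than the number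
of Parikh vectors of factors of length `n`, which is the abelian complexity. Conversely,
in a `C`-balanced word every Parikh vector lies in a box of side `2C + 1` around that of
the prefix of length `n`.
-/

lemma Int.exists_eq_of_le_of_le_of_succ_le {f : ℕ → ℤ} (hf : ∀ n, f (n + 1) ≤ f n + 1)
    {i j : ℕ} (hij : i ≤ j) {v : ℤ} (hi : f i ≤ v) (hj : v ≤ f j) : ∃ k, f k = v := by
  induction j, hij using Nat.le_induction with
  | base => exact ⟨i, le_antisymm hi hj⟩
  | succ j _ ih =>
    by_cases hv : v ≤ f j
    · exact ih hv
    · exact ⟨j + 1, by linarith [hf j]⟩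

lemma Int.ordConnected_range_of_abs_sub_le_one {f : ℕ → ℤ} (hf : ∀ n, |f (n + 1) - f n| ≤ 1) :
    (Set.range f).OrdConnected := by
  refine ⟨?_⟩
  rintro _ ⟨i, rfl⟩ _ ⟨j, rfl⟩ v ⟨hi, hj⟩
  rcases le_total i j with hij | hji
  · exact Int.exists_eq_of_le_of_le_of_succ_le (fun n => by linarith [(abs_le.1 (hf n)).2])
      hij hi hj
  · -- a downward crossing of `f` is an upward crossing of `-f`
    obtain ⟨k, hk⟩ := Int.exists_eq_of_le_of_le_of_succ_le (f := fun n => -f n)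
      (fun n => by linarith [(abs_le.1 (hf n)).1]) hji (neg_le_neg hj) (neg_le_neg hi)
    exact ⟨k, neg_inj.1 hk⟩

section Words

variable {A : Type*} (ω : ℕ → A)

lemma length_factor (i n : ℕ) : (factor ω i n).length = n := by
  simp [factor]

lemma factor_succ_eq_cons (i n : ℕ) : factor ω i (n + 1) = ω i :: factor ω (i + 1) n := by
  simp only [factor, List.range_succ_eq_map, List.map_cons, Nat.add_zero, List.map_map]
  congr 1
  exact List.map_congr_left fun j _ => by simp [Nat.add_right_comm, Nat.add_assoc]

lemma factor_succ_eq_append (i n : ℕ) : factor ω i (n + 1) = factor ω i n ++ [ω (i + n)] := by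
  simp [factor, List.range_succ]

variable [DecidableEq A]

lemma abs_count_factor_succ_sub_le_one (a : A) (i n : ℕ) :
    |((factor ω (i + 1) n).count a : ℤ) - (factor ω i n).count a| ≤ 1 := by
  have hfront := congrArg (List.count a) (factor_succ_eq_cons ω i n)
  have hback := congrArg (List.count a) (factor_succ_eq_append ω i n)
  simp only [List.count_cons, List.count_append, List.count_nil, beq_iff_eq] at hfront hback
  split_ifs at hfront hback <;> (rw [abs_le]; omega)

def parikhVector (n i : ℕ) : A → ℕ := fun a => (factor ω i n).count a

lemma abelianComplexity_eq_ncard_range (n : ℕ) :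
    abelianComplexity ω n = (Set.range (parikhVector ω n)).ncard := by
  unfold abelianComplexity
  congr
  ext c
  exact exists_congr fun i => eq_comm

lemma finite_range_parikhVector [Finite A] (n : ℕ) :
    (Set.range (parikhVector ω n)).Finite := by
  refine (Set.Finite.pi fun _ => Set.finite_Iic n).subset ?_
  rintro _ ⟨i, rfl⟩ a -
  exact (List.count_le_length).trans (length_factor ω i n).le

lemma abs_count_factor_sub_lt_abelianComplexity [Finite A] (a : A) (n i j : ℕ) :
    |((factor ω i n).count a : ℤ) - (factor ω j n).count a| < abelianComplexity ω n := by
  set g : ℕ → ℤ := fun k => ((factor ω k n).count a : ℤ)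
  have hrange : Set.range g = (fun c : A → ℕ => (c a : ℤ)) '' Set.range (parikhVector ω n) := by
    rw [← Set.range_comp]
    rfl
  have hfin : (Set.range g).Finite := hrange ▸ (finite_range_parikhVector ω n).image _
  have hinterval : Set.uIcc (g j) (g i) ⊆ Set.range g :=
    (Int.ordConnected_range_of_abs_sub_le_one fun k => abs_count_factor_succ_sub_le_one ω a k n
      ).uIcc_subset ⟨j, rfl⟩ ⟨i, rfl⟩
  have hcard : (g i - g j).natAbs + 1 ≤ abelianComplexity ω n :=
    calc (g i - g j).natAbs + 1 = (Set.uIcc (g j) (g i)).ncard := by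
          rw [← Finset.coe_uIcc, Set.ncard_coe_finset, Int.card_uIcc]
      _ ≤ (Set.range g).ncard := Set.ncard_le_ncard hinterval hfin
      _ ≤ (Set.range (parikhVector ω n)).ncard :=
          hrange ▸ Set.ncard_image_le (finite_range_parikhVector ω n)
      _ = abelianComplexity ω n := (abelianComplexity_eq_ncard_range ω n).symm
  rw [Int.abs_eq_natAbs]
  exact Nat.cast_lt.mpr hcard

lemma abelianComplexity_le_of_isCBalanced [Fintype A] {C : ℕ} (hω : IsCBalanced ω C) (n : ℕ) :
    abelianComplexity ω n ≤ (2 * C + 1) ^ Fintype.card A := by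
  set box := Fintype.piFinset fun a => Finset.Icc (parikhVector ω n 0 a - C)
    (parikhVector ω n 0 a + C)
  have hsub : Set.range (parikhVector ω n) ⊆ box := by
    rintro _ ⟨i, rfl⟩
    simp only [box, Finset.mem_coe, Fintype.mem_piFinset, Finset.mem_Icc]
    intro a
    have := abs_le.1 (hω a n i 0)
    simp only [parikhVector]
    omega
  calc abelianComplexity ω n = (Set.range (parikhVector ω n)).ncard :=
        abelianComplexity_eq_ncard_range ω n
    _ ≤ (box : Set (A → ℕ)).ncard := Set.ncard_le_ncard hsub box.finite_toSet
    _ = ∏ a : A, (Finset.Icc (parikhVector ω n 0 a - C) (parikhVector ω n 0 a + C)).card := by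
        rw [Set.ncard_coe_finset, Fintype.card_piFinset]
    _ ≤ (2 * C + 1) ^ Fintype.card A :=
        Finset.prod_le_pow_card _ _ _ fun a _ => by rw [Nat.card_Icc]; omega

end Words

/-- The abelian complexity of an infinite word over a finite alphabet is bounded
iff the word is `C`-balanced for some positive integer `C`. -/
theorem abelianComplexity_bounded_iff_balanced
    {A : Type*} [Fintype A] [DecidableEq A] (ω : ℕ → A) :
    (∃ M : ℕ, ∀ n : ℕ, abelianComplexity ω n ≤ M) ↔
      ∃ C : ℕ, 0 < C ∧ IsCBalanced ω C := by
  constructor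
  · rintro ⟨M, hM⟩
    refine ⟨M + 1, M.succ_pos, fun a n i j => ?_⟩
    have hlt := abs_count_factor_sub_lt_abelianComplexity ω a n i j
    have hle : (abelianComplexity ω n : ℤ) ≤ M := by exact_mod_cast hM n
    push_cast
    linarith
  · rintro ⟨C, -, hω⟩
    exact ⟨_, abelianComplexity_le_of_isCBalanced ω hω⟩
end

section
/- Let W be an aperiodic infinite word over a 2-letter alphabet. Then W is balanced (equivalently, W is a Sturmian word) if and only if ρ^ab_W(n) = 2 for all n ≥ 1. -/
/-- `ω` is ultimately periodic: of the form `u v v v ⋯` with `v` nonempty. -/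
def UltimatelyPeriodic {A : Type*} (ω : ℕ → A) : Prop :=
  ∃ m p : ℕ, 0 < p ∧ ∀ n : ℕ, m ≤ n → ω (n + p) = ω n

private lemma factor_succ_right {A : Type*} (ω : ℕ → A) (i n : ℕ) :
    factor ω i (n+1) = factor ω i n ++ [ω (i+n)] := by
  simp [factor, List.range_succ]

private lemma factor_succ_left {A : Type*} (ω : ℕ → A) (i n : ℕ) :
    factor ω i (n+1) = ω i :: factor ω (i+1) n := by
  unfold factor
  rw [List.range_succ_eq_map, List.map_cons, List.map_map]
  refine congrArg₂ _ (by simp) ?_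
  apply List.map_congr_left
  intro j _
  show ω (i + (j+1)) = ω (i + 1 + j)
  congr 1
  omega

private lemma count_zero_add_count_one (l : List (Fin 2)) :
    l.count 0 + l.count 1 = l.length := by
  induction l with
  | nil => simp
  | cons a t ih => fin_cases a <;> simp [List.count_cons] <;> omega

private lemma count_step (W : ℕ → Fin 2) (a : Fin 2) (n i : ℕ) :
    (factor W (i+1) n).count a + (if W i = a then 1 else 0)
      = (factor W i n).count a + (if W (i+n) = a then 1 else 0) := by
  have h1 := congrArg (List.count a) (factor_succ_left W i n)
  have h2 := congrArg (List.count a) (factor_succ_right W i n)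
  by_cases hA : W i = a <;> by_cases hB : W (i+n) = a <;>
    simp [List.count_cons, List.count_append, hA, hB] at h1 h2 ⊢ <;> omega

private lemma ivt_up (g : ℕ → ℕ) (hg : ∀ i, g (i+1) ≤ g i + 1 ∧ g i ≤ g (i+1) + 1)
    (i c : ℕ) : ∀ n, g i ≤ c → c ≤ g (i + n) → ∃ k, g k = c := by
  intro n
  induction n with
  | zero => intro h1 h2; exact ⟨i, le_antisymm h1 (by simpa using h2)⟩
  | succ n ih =>
    intro h1 h2
    by_cases h : c ≤ g (i + n)
    · exact ih h1 h
    · push_neg at h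
      have hs := (hg (i + n)).1
      have h2' : c ≤ g (i + n + 1) := h2
      exact ⟨i + n + 1, by omega⟩

private lemma ivt_down (g : ℕ → ℕ) (hg : ∀ i, g (i+1) ≤ g i + 1 ∧ g i ≤ g (i+1) + 1)
    (i c : ℕ) : ∀ n, g (i + n) ≤ c → c ≤ g i → ∃ k, g k = c := by
  intro n
  induction n with
  | zero => intro h1 h2; exact ⟨i, le_antisymm (by simpa using h1) h2⟩
  | succ n ih =>
    intro h1 h2
    by_cases h : g (i + n) ≤ c
    · exact ih h h2
    · push_neg at h
      have hs := (hg (i + n)).2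
      have h1' : g (i + n + 1) ≤ c := h1
      exact ⟨i + n + 1, by omega⟩

private lemma ivt (g : ℕ → ℕ) (hg : ∀ i, g (i+1) ≤ g i + 1 ∧ g i ≤ g (i+1) + 1)
    {i j c : ℕ} (h1 : g i ≤ c) (h2 : c ≤ g j) : ∃ k, g k = c := by
  rcases le_total i j with h | h
  · obtain ⟨n, rfl⟩ := Nat.exists_eq_add_of_le h
    exact ivt_up g hg i c n h1 h2
  · obtain ⟨n, rfl⟩ := Nat.exists_eq_add_of_le h
    exact ivt_down g hg j c n h1 h2

private lemma factor_length {A : Type*} (ω : ℕ → A) (i n : ℕ) :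
    (factor ω i n).length = n := by simp [factor]

private lemma abelianComplexity_eq_ncard (W : ℕ → Fin 2) (n : ℕ) :
    abelianComplexity W n = Set.ncard {k | ∃ i, (factor W i n).count 1 = k} := by
  unfold abelianComplexity
  have himg : (fun c : Fin 2 → ℕ => c 1) '' {c | ∃ i : ℕ, c = fun a => (factor W i n).count a}
      = {k | ∃ i, (factor W i n).count 1 = k} := by
    ext k
    constructor
    · rintro ⟨c, ⟨i, rfl⟩, rfl⟩; exact ⟨i, rfl⟩
    · rintro ⟨i, rfl⟩; exact ⟨_, ⟨i, rfl⟩, rfl⟩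
  rw [← himg, Set.ncard_image_of_injOn]
  rintro c1 ⟨i, rfl⟩ c2 ⟨j, rfl⟩ h
  simp only at h
  have h1 := count_zero_add_count_one (factor W i n)
  have h2 := count_zero_add_count_one (factor W j n)
  have l1 := factor_length W i n
  have l2 := factor_length W j n
  funext a
  fin_cases a
  · show (factor W i n).count 0 = (factor W j n).count 0
    omega
  · exact h

private lemma step_bounds (W : ℕ → Fin 2) (n i : ℕ) :
    (factor W (i+1) n).count 1 ≤ (factor W i n).count 1 + 1 ∧
    (factor W i n).count 1 ≤ (factor W (i+1) n).count 1 + 1 := by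
  have hs := count_step W 1 n i
  by_cases h1 : W i = 1 <;> by_cases h2 : W (i+n) = 1 <;> simp [h1, h2] at hs <;> omega

private lemma fin2_eq_of_iff {a b : Fin 2} (h : (a = 1) ↔ (b = 1)) : a = b := by
  fin_cases a <;> fin_cases b <;> simp_all

private lemma exists_count_ne (W : ℕ → Fin 2) (hW : ¬ UltimatelyPeriodic W)
    (n : ℕ) (hn : 1 ≤ n) :
    ∃ i j, (factor W i n).count 1 ≠ (factor W j n).count 1 := by
  by_contra h
  push_neg at h
  apply hW
  refine ⟨0, n, hn, fun m _ => ?_⟩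
  have hs := count_step W 1 n m
  have he := h (m+1) m
  refine fin2_eq_of_iff ?_
  by_cases h1 : W m = 1 <;> by_cases h2 : W (m+n) = 1 <;>
    simp [h1, h2] at hs ⊢ <;> omega

/-- An aperiodic binary word is balanced (i.e. Sturmian) iff its abelian
complexity equals `2` for all `n ≥ 1`. -/
theorem sturmian_iff_abelianComplexity_eq_two
    (W : ℕ → Fin 2) (hW : ¬ UltimatelyPeriodic W) :
    IsCBalanced W 1 ↔ ∀ n : ℕ, 1 ≤ n → abelianComplexity W n = 2 := by
  constructor
  · intro hbal n hn
    rw [abelianComplexity_eq_ncard]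
    have hbal1 : ∀ i j : ℕ, (factor W i n).count 1 ≤ (factor W j n).count 1 + 1 := by
      intro i j
      have := hbal 1 n i j
      rw [abs_le] at this
      omega
    have key : ∀ i0 j0 : ℕ, (factor W i0 n).count 1 < (factor W j0 n).count 1 →
        Set.ncard {k | ∃ i, (factor W i n).count 1 = k} = 2 := by
      intro i0 j0 hlt
      have hset : {k | ∃ i, (factor W i n).count 1 = k}
          = {(factor W i0 n).count 1, (factor W i0 n).count 1 + 1} := by
        ext k
        simp only [Set.mem_setOf_eq, Set.mem_insert_iff, Set.mem_singleton_iff]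
        constructor
        · rintro ⟨m, rfl⟩
          have h1 := hbal1 m i0
          have h4 := hbal1 j0 m
          have h5 := hbal1 j0 i0
          omega
        · rintro (rfl | rfl)
          · exact ⟨i0, rfl⟩
          · refine ⟨j0, ?_⟩
            have h5 := hbal1 j0 i0
            omega
      rw [hset]
      exact Set.ncard_pair (by omega)
    obtain ⟨i0, j0, h01⟩ := exists_count_ne W hW n hn
    rcases lt_or_gt_of_ne h01 with h | h
    · exact key i0 j0 h
    · exact key j0 i0 h
  · intro h a n i j
    rcases Nat.eq_zero_or_pos n with rfl | hn
    · simp [factor]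
    · have hc := h n hn
      rw [abelianComplexity_eq_ncard] at hc
      obtain ⟨x, y, hxy, hT⟩ := Set.ncard_eq_two.mp hc
      have hmem : ∀ k : ℕ, (∃ i, (factor W i n).count 1 = k) → k = x ∨ k = y := by
        intro k hk
        have : k ∈ ({x, y} : Set ℕ) := hT ▸ hk
        simpa using this
      have hx : ∃ i, (factor W i n).count 1 = x := by
        have : x ∈ {k | ∃ i, (factor W i n).count 1 = k} := by rw [hT]; simp
        exact this
      have hy : ∃ i, (factor W i n).count 1 = y := by
        have : y ∈ {k | ∃ i, (factor W i n).count 1 = k} := by rw [hT]; simp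
        exact this
      have hdiff : ∀ k1 k2 : ℕ, (∃ i, (factor W i n).count 1 = k1) →
          (∃ i, (factor W i n).count 1 = k2) → k1 ≤ k2 + 1 := by
        rintro k1 k2 ⟨i1, hi1⟩ ⟨i2, hi2⟩
        by_contra hco
        push_neg at hco
        obtain ⟨m, hm⟩ := ivt (fun i => (factor W i n).count 1)
          (fun i => step_bounds W n i) (i := i2) (j := i1) (c := k2 + 1)
          (by simp [hi2]) (by simp [hi1]; omega)
        have h1 := hmem _ ⟨i1, hi1⟩
        have h2 := hmem _ ⟨i2, hi2⟩
        have h3 := hmem _ ⟨m, hm⟩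
        omega
      have hxy1 : x ≤ y + 1 := hdiff x y hx hy
      have hyx1 : y ≤ x + 1 := hdiff y x hy hx
      have m1 := hmem _ ⟨i, rfl⟩
      have m2 := hmem _ ⟨j, rfl⟩
      have c1 := count_zero_add_count_one (factor W i n)
      have c2 := count_zero_add_count_one (factor W j n)
      have l1 := factor_length W i n
      have l2 := factor_length W j n
      have ha : ∀ b : Fin 2, b = 0 ∨ b = 1 := by decide
      rw [abs_le]
      rcases ha a with rfl | rfl
      · omega
      · omega
end

section
/- Let t be the Tribonacci word. For every integer k ≥ 1 and every position i ≥ 0, the suffix of t starting at position i begins in infinitely many abelian k-powers; that is, for every N there is an abelian k-power of length greater than N occurring as a prefix of that suffix. -/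
/-- The word `ω` has an abelian `k`-power with abelian period `ℓ > 0` starting at
position `i`. -/
def AbelianPowerAt {A : Type*} [DecidableEq A] (ω : ℕ → A) (i k ℓ : ℕ) : Prop :=
  0 < ℓ ∧ ∀ j₁ j₂ : ℕ, j₁ < k → j₂ < k → ∀ a : A,
    (factor ω (i + j₁ * ℓ) ℓ).count a = (factor ω (i + j₂ * ℓ) ℓ).count a

/-- The Tribonacci morphism `τ(0) = 01`, `τ(1) = 02`, `τ(2) = 0`. -/
def tau : Fin 3 → List (Fin 3) := fun a =>
  if a = 0 then [0, 1] else if a = 1 then [0, 2] else [0]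

/-- The iterates `τ^k(0)`, which are the prefixes of the Tribonacci word. -/
def tribPrefix : ℕ → List (Fin 3)
  | 0 => [0]
  | k + 1 => ((tribPrefix k).map tau).flatten

open Filter Relation

theorem eventually_not_of_monotone_of_bounded {a : ℕ → ℕ} {P : ℕ → Prop} {n : ℕ}
    (ha : Monotone a) (hP : ∀ t, P t → a t < a (t + 1)) (hn : ∀ t, a t ≤ n) :
    ∀ᶠ t in atTop, ¬ P t := by
  by_contra h
  rw [not_eventually] at h
  simp only [not_not, frequently_atTop] at h
  have unbounded : ∀ K, ∃ t, K ≤ a t := by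
    intro K
    induction K with
    | zero => exact ⟨0, Nat.zero_le _⟩
    | succ K ih =>
      obtain ⟨t, ht⟩ := ih
      obtain ⟨u, htu, hu⟩ := h t
      exact ⟨u + 1, by have := ha htu; have := hP u hu; omega⟩
  obtain ⟨t, ht⟩ := unbounded (n + 1)
  have := hn t
  omega

section Factor

variable {A : Type*} (ω : ℕ → A)

theorem factor_add (i x y : ℕ) : factor ω i (x + y) = factor ω i x ++ factor ω (i + x) y := by
  simp only [factor, List.range_add, List.map_append, List.map_map]
  congr 1
  exact List.map_congr_left fun j _ => by simp [Nat.add_assoc]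

theorem take_factor {n n' : ℕ} (i : ℕ) (h : n ≤ n') :
    (factor ω i n').take n = factor ω i n := by
  rw [factor, ← List.map_take, List.take_range, min_eq_left h, factor]

theorem abelianPowerAt_of_coe_factor_eq_nsmul [DecidableEq A] {i k ℓ : ℕ} (hℓ : 0 < ℓ)
    (v : Multiset A) (h : ∀ j ≤ k, (factor ω i (j * ℓ) : Multiset A) = j • v) :
    AbelianPowerAt ω i k ℓ := by
  have block : ∀ j < k, (factor ω (i + j * ℓ) ℓ : Multiset A) = v := fun j hj => by
    have := h (j + 1) hj
    rw [add_mul, one_mul, factor_add, ← Multiset.coe_add, h j hj.le, succ_nsmul] at this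
    exact add_left_cancel this
  refine ⟨hℓ, fun j₁ j₂ hj₁ hj₂ a => ?_⟩
  rw [← Multiset.coe_count, ← Multiset.coe_count, block j₁ hj₁, block j₂ hj₂]

end Factor

namespace Tribonacci

theorem tribPrefix_succ (m : ℕ) : tribPrefix (m + 1) = (tribPrefix m).flatMap tau := rfl

theorem tribPrefix_add_three (m : ℕ) :
    tribPrefix (m + 3) = tribPrefix (m + 2) ++ tribPrefix (m + 1) ++ tribPrefix m := by
  induction m with
  | zero => decide
  | succ m ih =>
    conv_lhs => rw [tribPrefix_succ, ih, List.flatMap_append, List.flatMap_append]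
    rfl

theorem tribPrefix_ne_nil (m : ℕ) : tribPrefix m ≠ [] := by
  induction m with
  | zero => decide
  | succ m ih =>
    obtain ⟨a, w, hw⟩ := List.exists_cons_of_ne_nil ih
    rw [tribPrefix_succ, hw, List.flatMap_cons]
    refine List.append_ne_nil_of_left_ne_nil ?_ _
    fin_cases a <;> decide

theorem exists_tribPrefix_succ_eq_append (m : ℕ) :
    ∃ a w, tribPrefix (m + 1) = tribPrefix m ++ a :: w := by
  match m with
  | 0 => exact ⟨1, [], rfl⟩
  | 1 => exact ⟨0, [2], rfl⟩
  | m + 2 =>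
    obtain ⟨a, w, hw⟩ := List.exists_cons_of_ne_nil (tribPrefix_ne_nil (m + 1))
    exact ⟨a, w ++ tribPrefix m, by rw [tribPrefix_add_three, hw]; simp⟩

theorem lt_length_tribPrefix (m : ℕ) : m < (tribPrefix m).length := by
  induction m with
  | zero => decide
  | succ m ih =>
    obtain ⟨a, w, hw⟩ := exists_tribPrefix_succ_eq_append m
    rw [hw, List.length_append, List.length_cons]
    omega

theorem exists_append_singleton_prefix_tribPrefix_succ {w : List (Fin 3)} {M : ℕ}
    (h : w <+: tribPrefix M) : ∃ a, w ++ [a] <+: tribPrefix (M + 1) := by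
  obtain ⟨a, v, hv⟩ := exists_tribPrefix_succ_eq_append M
  obtain ⟨u, hu⟩ := h
  rw [← hu] at hv
  cases u with
  | nil => exact ⟨a, v, by simp [hv]⟩
  | cons b u => exact ⟨b, u ++ a :: v, by simp [hv]⟩

/-- `w` is a prefix of the Tribonacci word. -/
def IsTribPrefix (w : List (Fin 3)) : Prop := ∃ M, w <+: tribPrefix M

theorem IsTribPrefix.flatMap_tau {w : List (Fin 3)} (h : IsTribPrefix w) :
    IsTribPrefix (w.flatMap tau) := by
  obtain ⟨M, hM⟩ := h
  exact ⟨M + 1, hM.flatMap tau⟩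

/-- Every image `τ(a)` begins with `0`, and the letter of `t` after a prefix `w` is some `a`. -/
theorem IsTribPrefix.flatMap_tau_append_zero {w : List (Fin 3)} (h : IsTribPrefix w) :
    IsTribPrefix (w.flatMap tau ++ [0]) := by
  obtain ⟨M, hM⟩ := h
  obtain ⟨a, ha⟩ := exists_append_singleton_prefix_tribPrefix_succ hM
  refine ⟨M + 2, List.IsPrefix.trans ?_ (ha.flatMap tau)⟩
  rw [List.flatMap_append]
  refine List.prefix_append_right_inj _ |>.mpr ?_
  fin_cases a <;> decide

theorem flatMap_tribPrefix_eq_flatMap_tau {L : List ℕ} (hL : ∀ b ∈ L, 1 ≤ b) :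
    L.flatMap tribPrefix = ((L.map (· - 1)).flatMap tribPrefix).flatMap tau := by
  rw [List.flatMap_assoc, List.flatMap_map]
  refine List.flatMap_congr fun b hb => ?_
  rw [← tribPrefix_succ, Nat.sub_add_cancel (hL b hb)]

theorem sortedGT_map_sub_one {L : List ℕ} (hL : L.SortedGT) (h : ∀ b ∈ L, 1 ≤ b) :
    (L.map (· - 1)).SortedGT := by
  rw [List.sortedGT_iff_pairwise, List.pairwise_map]
  exact (List.sortedGT_iff_pairwise.mp hL).imp_of_mem fun _ hb hab => by have := h _ hb; omega

/-- Desubstitution: a decreasing concatenation of the `τ^b(0)` is `τ` of a shorter one, followed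
by `0` when it ends with `τ^0(0)`. -/
theorem isTribPrefix_flatMap_tribPrefix {L : List ℕ} (hL : L.SortedGT) :
    IsTribPrefix (L.flatMap tribPrefix) := by
  suffices ∀ n (L : List ℕ), L.SortedGT → (∀ b ∈ L, b < n) →
      IsTribPrefix (L.flatMap tribPrefix) from
    this _ L hL fun b hb => Nat.lt_succ_of_le (List.le_sum_of_mem hb)
  intro n
  induction n with
  | zero =>
    intro L _ hn
    rw [List.eq_nil_iff_forall_not_mem.mpr fun b hb => Nat.not_lt_zero _ (hn b hb)]
    exact ⟨0, List.nil_prefix⟩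
  | succ n ih =>
    intro L hL hn
    have desubst : ∀ L : List ℕ, L.SortedGT → (∀ b ∈ L, 1 ≤ b) → (∀ b ∈ L, b < n + 1) →
        IsTribPrefix ((L.map (· - 1)).flatMap tribPrefix) := fun L hL hpos hn =>
      ih _ (sortedGT_map_sub_one hL hpos) fun _ hx => by
        obtain ⟨b, hb, rfl⟩ := List.mem_map.mp hx
        have := hn b hb
        have := hpos b hb
        omega
    rcases L.eq_nil_or_concat' with rfl | ⟨L, c, rfl⟩
    · exact ⟨0, List.nil_prefix⟩
    obtain ⟨hL', -, hgt⟩ := List.pairwise_append.mp (List.sortedGT_iff_pairwise.mp hL)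
    have hpos : ∀ b ∈ L, 1 ≤ b := fun b hb => by
      have := hgt b hb c (List.mem_singleton_self c)
      omega
    rcases Nat.eq_zero_or_pos c with rfl | hc
    · rw [List.flatMap_append, flatMap_tribPrefix_eq_flatMap_tau hpos]
      exact (desubst L (List.sortedGT_iff_pairwise.mpr hL') hpos
        fun b hb => hn b (List.mem_append_left _ hb)).flatMap_tau_append_zero
    · have hpos : ∀ b ∈ L ++ [c], 1 ≤ b := by
        simp only [List.mem_append, List.mem_singleton]
        rintro b (hb | rfl)
        exacts [hpos b hb, hc]
      rw [flatMap_tribPrefix_eq_flatMap_tau hpos]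
      exact (desubst _ hL hpos hn).flatMap_tau

/-- The carry `p, p ↦ p + 1, p - 3` on a multiset of indices, modelled on the identity
`2 T_p = T_{p+1} + T_{p-3}` of any Tribonacci-type sequence. -/
def CarryAt (p : ℤ) (A B : Multiset ℤ) : Prop :=
  ∃ S, A = p ::ₘ p ::ₘ S ∧ B = (p + 1) ::ₘ (p - 3) ::ₘ S

def Carry (A B : Multiset ℤ) : Prop := ∃ p, CarryAt p A B

def weight (c : ℚ) (A : Multiset ℤ) : ℚ := (A.map (c ^ ·)).sum

theorem le_weight {c : ℚ} (hc : 0 < c) {A : Multiset ℤ} {x : ℤ} (hx : x ∈ A) :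
    c ^ x ≤ weight c A :=
  Multiset.single_le_sum (fun _ hy => by
    obtain ⟨z, -, rfl⟩ := Multiset.mem_map.mp hy
    exact (zpow_pos hc z).le) _ (Multiset.mem_map_of_mem _ hx)

namespace CarryAt

variable {p : ℤ} {A B : Multiset ℤ}

theorem card_eq (h : CarryAt p A B) : B.card = A.card := by
  obtain ⟨S, rfl, rfl⟩ := h
  simp

theorem mem_left (h : CarryAt p A B) : p ∈ A := by
  obtain ⟨S, rfl, rfl⟩ := h
  simp

theorem add_one_mem (h : CarryAt p A B) : p + 1 ∈ B := by
  obtain ⟨S, rfl, rfl⟩ := h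
  simp

theorem sub_three_mem (h : CarryAt p A B) : p - 3 ∈ B := by
  obtain ⟨S, rfl, rfl⟩ := h
  simp

theorem count_le (h : CarryAt p A B) {x : ℤ} (hx : x ≠ p) : A.count x ≤ B.count x := by
  obtain ⟨S, rfl, rfl⟩ := h
  simp only [Multiset.count_cons, hx, if_false]
  omega

theorem count_add_one_lt (h : CarryAt p A B) : A.count (p + 1) < B.count (p + 1) := by
  obtain ⟨S, rfl, rfl⟩ := h
  simp only [Multiset.count_cons]
  split_ifs <;> omega

theorem filter_lt {X : ℤ} (h : CarryAt p A B) (hp : p + 1 < X) :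
    CarryAt p (A.filter (· < X)) (B.filter (· < X)) := by
  obtain ⟨S, rfl, rfl⟩ := h
  refine ⟨S.filter (· < X), ?_, ?_⟩ <;>
    rw [Multiset.filter_cons_of_pos _ (by omega), Multiset.filter_cons_of_pos _ (by omega)]

theorem weight_eq {c : ℚ} (hc : c ≠ 0) (h : CarryAt p A B) :
    weight c B = weight c A + c ^ (p - 3) * (c ^ 4 + 1 - 2 * c ^ 3) := by
  obtain ⟨S, rfl, rfl⟩ := h
  obtain ⟨q, rfl⟩ : ∃ q, p = q + 3 := ⟨p - 3, by ring⟩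
  simp only [weight, Multiset.map_cons, Multiset.sum_cons, show q + 3 + 1 = q + 4 by ring,
    show q + 3 - 3 = q by ring, zpow_add₀ hc]
  norm_num
  ring

theorem weight_le (h : CarryAt p A B) : weight (3 / 2) B ≤ weight (3 / 2) A := by
  rw [h.weight_eq (by norm_num)]
  have := zpow_pos (by norm_num : (0 : ℚ) < 3 / 2) (p - 3)
  nlinarith

theorem sum_map_eq {M : Type*} [AddCommMonoid M] {g : ℤ → M} (h : CarryAt p A B)
    (hg : ∀ n, p - 3 ≤ n → g (n + 3) = g (n + 2) + g (n + 1) + g n) :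
    (B.map g).sum = (A.map g).sum := by
  obtain ⟨S, rfl, rfl⟩ := h
  obtain ⟨q, rfl⟩ : ∃ q, p = q + 3 := ⟨p - 3, by ring⟩
  have h₀ := hg q (by omega)
  have h₁ := hg (q + 1) (by omega)
  simp only [show q + 1 + 3 = q + 3 + 1 by ring, show q + 1 + 2 = q + 3 by ring,
    show q + 1 + 1 = q + 2 by ring] at h₁
  simp only [Multiset.map_cons, Multiset.sum_cons, h₁, show q + 3 - 3 = q by ring]
  nth_rw 2 [h₀]
  abel

theorem forall_le {c : ℤ} (h : CarryAt p A B) (hB : ∀ x ∈ B, c ≤ x) : ∀ x ∈ A, c ≤ x := by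
  have hp := hB _ h.sub_three_mem
  obtain ⟨S, rfl, rfl⟩ := h
  simp only [Multiset.mem_cons] at hB ⊢
  rintro x (rfl | rfl | hx)
  · omega
  · omega
  · exact hB x (Or.inr (Or.inr hx))

end CarryAt

section Run

variable {f : ℕ → Multiset ℤ} {pos : ℕ → ℤ}

theorem card_run_eq (hf : ∀ t, CarryAt (pos t) (f t) (f (t + 1))) (t : ℕ) :
    (f t).card = (f 0).card := by
  induction t with
  | zero => rfl
  | succ t ih => rw [(hf t).card_eq, ih]

/-- The non-increasing weight `∑ (3/2)^x` bounds every index ever present. -/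
theorem exists_max_of_run (hf : ∀ t, CarryAt (pos t) (f t) (f (t + 1))) :
    ∃ X T, X ∈ f T ∧ ∀ t, ∀ x ∈ f t, x ≤ X := by
  have hanti : Antitone fun t => weight (3 / 2) (f t) :=
    antitone_nat_of_succ_le fun t => (hf t).weight_le
  obtain ⟨n, hn⟩ :=
    pow_unbounded_of_one_lt (weight (3 / 2) (f 0)) (by norm_num : (1 : ℚ) < 3 / 2)
  have hbdd : ∀ t, ∀ x ∈ f t, x ≤ n := fun t x hx => by
    by_contra! hlt
    have := zpow_lt_zpow_right₀ (by norm_num : (1 : ℚ) < 3 / 2) hlt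
    have := le_weight (c := 3 / 2) (by norm_num) hx
    have := hanti (Nat.zero_le t)
    rw [zpow_natCast] at *
    linarith
  obtain ⟨X, ⟨T, hXT⟩, hX⟩ := Int.exists_greatest_of_bdd (P := fun x => ∃ t, x ∈ f t)
    ⟨n, fun x ⟨t, hx⟩ => hbdd t x hx⟩ ⟨_, 0, (hf 0).mem_left⟩
  exact ⟨X, T, hXT, fun t x hx => hX x ⟨t, hx⟩⟩

/-- Once the largest index `X` ever present has appeared, it never moves and its multiplicity
only grows, so carries at `X - 1` eventually stop; the part below `X` then runs forever with
fewer elements. -/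
theorem not_carry_run (f : ℕ → Multiset ℤ) (pos : ℕ → ℤ)
    (hf : ∀ t, CarryAt (pos t) (f t) (f (t + 1))) : False := by
  induction hn : (f 0).card using Nat.strong_induction_on generalizing f pos with
  | _ n ih =>
  obtain ⟨X, T₀, hXT₀, hX⟩ := exists_max_of_run hf
  have hpos_le : ∀ t, pos t ≤ X := fun t => hX t _ (hf t).mem_left
  have hpos_ne : ∀ t, pos t ≠ X := fun t h => by
    have := hX (t + 1) _ (hf t).add_one_mem
    omega
  have hmono : Monotone fun t => (f t).count X :=
    monotone_nat_of_le_succ fun t => (hf t).count_le (hpos_ne t).symm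
  have hstop := eventually_not_of_monotone_of_bounded hmono (P := fun t => pos t = X - 1)
    (fun t ht => by simpa [ht] using (hf t).count_add_one_lt)
    (fun t => hn ▸ card_run_eq hf t ▸ Multiset.count_le_card _ _)
  obtain ⟨T, hT⟩ := eventually_atTop.mp ((eventually_ge_atTop T₀).and hstop)
  have hXT : X ∈ f T := Multiset.count_pos.mp
    ((Multiset.count_pos.mpr hXT₀).trans_le (hmono (hT T le_rfl).1))
  refine ih _ ?_ (fun u => (f (T + u)).filter (· < X)) (fun u => pos (T + u))
    (fun u => (hf (T + u)).filter_lt ?_) rfl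
  · rw [← hn, ← card_run_eq hf T]
    refine Multiset.card_lt_card (lt_of_le_of_ne (Multiset.filter_le _ _) fun h => ?_)
    have := Multiset.of_mem_filter (h ▸ hXT)
    exact lt_irrefl _ this
  · have := hpos_le (T + u)
    have := hpos_ne (T + u)
    have := (hT (T + u) (Nat.le_add_right T u)).2
    omega

end Run

theorem wellFounded_carry : WellFounded fun B A => Carry A B :=
  wellFounded_iff_isEmpty_descending_chain.mpr ⟨fun ⟨f, hf⟩ => by
    choose pos hpos using hf
    exact not_carry_run f pos hpos⟩

theorem exists_reflTransGen_carry_nodup (A : Multiset ℤ) :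
    ∃ B, ReflTransGen Carry A B ∧ B.Nodup := by
  induction A using wellFounded_carry.induction with
  | _ A ih =>
  by_cases hA : A.Nodup
  · exact ⟨A, .refl, hA⟩
  obtain ⟨p, S, rfl⟩ : ∃ p S, A = p ::ₘ p ::ₘ S := by
    simpa [Multiset.nodup_iff_ne_cons_cons] using hA
  have h : Carry _ _ := ⟨p, S, rfl, rfl⟩
  obtain ⟨B, hB, hnd⟩ := ih _ h
  exact ⟨B, .head h hB, hnd⟩

section Conservation

variable {A B : Multiset ℤ} {c : ℤ}

theorem forall_le_of_reflTransGen (h : ReflTransGen Carry A B) (hB : ∀ x ∈ B, c ≤ x) :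
    ∀ x ∈ A, c ≤ x := by
  induction h using ReflTransGen.head_induction_on with
  | refl => exact hB
  | head hAC _ ih => exact hAC.choose_spec.forall_le ih

theorem sum_map_eq_of_reflTransGen {M : Type*} [AddCommMonoid M] {g : ℤ → M}
    (h : ReflTransGen Carry A B) (hB : ∀ x ∈ B, c ≤ x)
    (hg : ∀ n, c ≤ n → g (n + 3) = g (n + 2) + g (n + 1) + g n) :
    (B.map g).sum = (A.map g).sum := by
  induction h using ReflTransGen.head_induction_on with
  | refl => rfl
  | head hAC hCB ih =>
    obtain ⟨p, hp⟩ := hAC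
    have := forall_le_of_reflTransGen hCB hB _ hp.sub_three_mem
    rw [ih, hp.sum_map_eq fun n hn => hg n (by omega)]

end Conservation

/-- Carry `j` copies of the index `0` to a set of distinct indices, then shift it up by `m`. -/
theorem eventually_exists_sortedGT_sum_eq {M : Type*} [AddCommMonoid M] (G : ℕ → M)
    (hG : ∀ n, G (n + 3) = G (n + 2) + G (n + 1) + G n) (i j : ℕ) :
    ∀ᶠ m in atTop, ∃ L : List ℕ, L.SortedGT ∧ (∀ b ∈ L, i < b) ∧ (L.map G).sum = j • G m := by
  obtain ⟨B, hAB, hnd⟩ := exists_reflTransGen_carry_nodup (Multiset.replicate j 0)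
  obtain ⟨c, hc⟩ := B.toFinset.bddBelow
  replace hc : ∀ x ∈ B, c ≤ x := fun x hx => hc (by simpa using hx)
  filter_upwards [eventually_ge_atTop (i + 1 - c).toNat] with m hm
  set index : ℤ → ℕ := fun x => (x + m).toNat
  have hindex : ∀ x ∈ B, i < index x := fun x hx => by
    have := hc x hx
    simp only [index]
    omega
  refine ⟨(B.map index).sort (· ≥ ·), ?_, ?_, ?_⟩
  · refine List.sortedGT_iff_nodup_and_sortedGE.mpr
      ⟨?_, List.sortedGE_iff_pairwise.mpr (Multiset.pairwise_sort _ _)⟩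
    rw [← Multiset.coe_nodup, Multiset.sort_eq]
    exact hnd.map_on fun x hx y hy hxy => by
      have := hc x hx
      have := hc y hy
      simp only [index] at hxy
      omega
  · intro b hb
    obtain ⟨x, hx, rfl⟩ := Multiset.mem_map.mp ((Multiset.mem_sort _).mp hb)
    exact hindex x hx
  · have hrec : ∀ n, c ≤ n →
        G (index (n + 3)) = G (index (n + 2)) + G (index (n + 1)) + G (index n) := fun n hn => by
        obtain ⟨k, hk⟩ : ∃ k : ℕ, n + m = k := ⟨(n + m).toNat, by omega⟩
        simp only [index, show n + 3 + m = k + 3 by omega, show n + 2 + m = k + 2 by omega,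
          show n + 1 + m = k + 1 by omega, hk]
        exact hG k
    calc ((B.map index).sort (· ≥ ·) |>.map G).sum = (B.map (G ∘ index)).sum := by
          rw [← Multiset.sum_coe, ← Multiset.map_coe, Multiset.sort_eq, Multiset.map_map]
      _ = ((Multiset.replicate j 0).map (G ∘ index)).sum :=
          sum_map_eq_of_reflTransGen hAB hc hrec
      _ = j • G m := by simp [index]

variable {t : ℕ → Fin 3} (ht : ∀ m : ℕ, factor t 0 (tribPrefix m).length = tribPrefix m)
include ht

theorem factor_zero_length_eq {w : List (Fin 3)} (hw : IsTribPrefix w) :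
    factor t 0 w.length = w := by
  obtain ⟨M, hM⟩ := hw
  have hlen := hM.length_le
  have hfac : factor t 0 w.length <+: tribPrefix M := by
    rw [← ht M, ← take_factor t 0 hlen]
    exact List.take_prefix _ _
  exact (List.prefix_of_prefix_length_le hfac hM (by simp [factor])).eq_of_length
    (by simp [factor])

/-- The prefix `w · τ^i(0)` of `t` shows that `t` has its length-`i` prefix again at position
`|w|`, so the factor of length `|w|` at position `i` is a rearrangement of `w`. -/
theorem coe_factor_eq_nsmul {i j m : ℕ} {L : List ℕ} (hL : L.SortedGT) (hLi : ∀ b ∈ L, i < b)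
    (hsum : (L.map fun b => (tribPrefix b : Multiset (Fin 3))).sum = j • ↑(tribPrefix m)) :
    (factor t i (j * (tribPrefix m).length) : Multiset (Fin 3)) = j • ↑(tribPrefix m) := by
  set w := L.flatMap tribPrefix
  have hw : (w : Multiset (Fin 3)) = j • ↑(tribPrefix m) := by
    rw [← Multiset.coe_bind, Multiset.bind, Multiset.join, Multiset.map_coe, Multiset.sum_coe,
      hsum]
  have hwlen : w.length = j * (tribPrefix m).length := by
    simpa using congrArg Multiset.card hw
  have hsorted : (L ++ [i]).SortedGT := by
    rw [List.sortedGT_iff_pairwise, List.pairwise_append]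
    exact ⟨List.sortedGT_iff_pairwise.mp hL, List.pairwise_singleton _ _,
      fun a ha b hb => List.eq_of_mem_singleton hb ▸ hLi a ha⟩
  have hpre := factor_zero_length_eq ht (isTribPrefix_flatMap_tribPrefix hsorted)
  rw [List.flatMap_append, List.flatMap_singleton, List.length_append, factor_add] at hpre
  obtain ⟨hw₀, hwi⟩ := List.append_inj hpre (by simp [factor])
  have hrepeat : factor t w.length i = factor t 0 i := by
    have hi := (lt_length_tribPrefix i).le
    rw [zero_add] at hwi
    rw [← take_factor t _ hi, hwi, ← ht i, take_factor t _ hi]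
  have hperm : factor t 0 i ++ factor t i w.length = w ++ factor t 0 i := by
    have h₁ := factor_add t 0 i w.length
    have h₂ := factor_add t 0 w.length i
    rw [zero_add] at h₁ h₂
    rw [← h₁, Nat.add_comm, h₂, hw₀, hrepeat]
  rw [← hwlen, ← hw]
  have := congrArg ((↑) : List (Fin 3) → Multiset (Fin 3)) hperm
  rw [← Multiset.coe_add, ← Multiset.coe_add, add_comm (w : Multiset (Fin 3))] at this
  exact add_left_cancel this

end Tribonacci

open Tribonacci

/-- For every `k ≥ 1`, each suffix of the Tribonacci word begins in infinitely
many abelian `k`-powers: arbitrarily long abelian `k`-powers occur as prefixes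
of every suffix. -/
theorem tribonacci_suffixes_begin_in_abelian_powers (t : ℕ → Fin 3)
    (ht : ∀ m : ℕ, factor t 0 (tribPrefix m).length = tribPrefix m)
    (k : ℕ) (hk : 1 ≤ k) (i : ℕ) :
    ∀ N : ℕ, ∃ ℓ : ℕ, AbelianPowerAt t i k ℓ ∧ N < k * ℓ := by
  intro N
  have hrec : ∀ n, (tribPrefix (n + 3) : Multiset (Fin 3)) =
      tribPrefix (n + 2) + tribPrefix (n + 1) + tribPrefix n := fun n => by
    rw [tribPrefix_add_three, Multiset.coe_add, Multiset.coe_add]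
  have hreps := (eventually_all_finite (Set.finite_Iic k)).mpr fun j _ =>
    eventually_exists_sortedGT_sum_eq (fun n => (tribPrefix n : Multiset (Fin 3))) hrec i j
  obtain ⟨m, hm, hmN⟩ := (hreps.and (eventually_ge_atTop N)).exists
  have hℓ := lt_length_tribPrefix m
  refine ⟨(tribPrefix m).length,
    abelianPowerAt_of_coe_factor_eq_nsmul t (by omega) (tribPrefix m) fun j hj => ?_, ?_⟩
  · obtain ⟨L, hL, hLi, hsum⟩ := hm j hj
    exact coe_factor_eq_nsmul ht hL hLi hsum
  · calc N < (tribPrefix m).length := by omega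
      _ ≤ k * (tribPrefix m).length := Nat.le_mul_of_pos_left _ hk
end

section
/- Every suffix of the Thue-Morse word TM₀ begins in an abelian 6-power; that is, for every position i ≥ 0 there is a nonempty prefix of the suffix of TM₀ starting at position i which is an abelian 6-power. -/
open Fin.NatCast in
/-- The Thue-Morse word: `TM n` is the parity of the number of `1`'s in the
binary expansion of `n`. -/
def TM : ℕ → Fin 2 := fun n => ((Nat.digits 2 n).count 1 : Fin 2)

/-! Since `TM (2n + 1) ≠ TM (2n)`, a factor of even length `2M` starting at an even position
contains exactly `M` letters of each kind; sliding it by one position changes the counts only by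
its first and last letters, so a factor of length `2M` starting at `2q + 1` is also balanced once
`TM (2q) = TM (2q + 2M)`. For `i < 2^t`, the six consecutive blocks of length `ℓ = 6 · 2^t`
starting at `i` are all balanced: for odd `i = 2q + 1` their boundary letters sit at
`2 (q + 2^t · 3j)` with `q < 2^t`, where `TM` equals `TM q + TM (3j)`, and `TM (3j) = 0` for
`j = 0, …, 6`. -/

lemma factor_one {A : Type*} (ω : ℕ → A) (p : ℕ) : factor ω p 1 = [ω p] := by
  simp [factor]

lemma factor_add_s19 {A : Type*} (ω : ℕ → A) (p m n : ℕ) :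
    factor ω p (m + n) = factor ω p m ++ factor ω (p + m) n := by
  simp only [factor, List.range_add, List.map_append, List.map_map, Function.comp_def, add_assoc]

lemma count_factor_succ_add {A : Type*} [DecidableEq A] (ω : ℕ → A) (p n : ℕ) (a : A) :
    (factor ω (p + 1) n).count a + [ω p].count a =
      (factor ω p n).count a + [ω (p + n)].count a := by
  rw [add_comm, ← List.count_append, ← List.count_append, ← factor_one, ← factor_one,
    ← factor_add_s19, ← factor_add_s19, add_comm]

lemma TM_add_two_pow_mul {n t : ℕ} (hn : n < 2 ^ t) (m : ℕ) :
    TM (n + 2 ^ t * m) = TM n + TM m := by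
  rcases Nat.eq_zero_or_pos m with rfl | hm
  · simp [TM]
  have hlen := (Nat.digits_length_le_iff (by norm_num) n).2 hn
  rw [TM, ← Nat.add_sub_cancel' hlen, ← Nat.digits_append_zeroes_append_digits (by norm_num) hm]
  simp only [List.count_append, List.count_replicate]
  open Fin.CommRing in exact Nat.cast_add _ _

lemma TM_two_mul (n : ℕ) : TM (2 * n) = TM n := by
  simpa [TM] using TM_add_two_pow_mul (t := 1) (n := 0) (by norm_num) n

lemma TM_two_mul_add_one (n : ℕ) : TM (2 * n + 1) = TM n + 1 := by
  simpa [TM, add_comm] using TM_add_two_pow_mul (t := 1) (n := 1) (by norm_num) n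

lemma TM_three_mul_eq_zero : ∀ j ≤ 6, TM (3 * j) = 0 := by
  decide

lemma count_factor_TM_two_mul_two (q : ℕ) (a : Fin 2) : (factor TM (2 * q) 2).count a = 1 := by
  rw [factor_add_s19 TM _ 1 1, factor_one, factor_one, TM_two_mul_add_one, TM_two_mul]
  generalize TM q = x
  fin_cases x <;> fin_cases a <;> rfl

lemma count_factor_TM_two_mul (q m : ℕ) (a : Fin 2) : (factor TM (2 * q) (2 * m)).count a = m := by
  induction m with
  | zero => rfl
  | succ m ih =>
    rw [mul_add_one, factor_add_s19, List.count_append, ih, ← mul_add, count_factor_TM_two_mul_two]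

lemma count_factor_TM_two_mul_add_one {q m : ℕ} (h : TM (2 * q + 2 * m) = TM (2 * q))
    (a : Fin 2) : (factor TM (2 * q + 1) (2 * m)).count a = m := by
  have := count_factor_succ_add TM (2 * q) (2 * m) a
  rw [h, count_factor_TM_two_mul] at this
  omega

lemma count_factor_TM_block {i t m j : ℕ} (hi : i < 2 ^ t) (hm : TM (m * (j + 1)) = TM (m * j))
    (a : Fin 2) :
    (factor TM (i + j * (2 * (2 ^ t * m))) (2 * (2 ^ t * m))).count a = 2 ^ t * m := by
  obtain ⟨q, rfl | rfl⟩ := Nat.even_or_odd' i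
  · rw [show 2 * q + j * (2 * (2 ^ t * m)) = 2 * (q + j * (2 ^ t * m)) by ring]
    exact count_factor_TM_two_mul _ _ a
  · have hq : q < 2 ^ t := by omega
    rw [show 2 * q + 1 + j * (2 * (2 ^ t * m)) = 2 * (q + 2 ^ t * (m * j)) + 1 by ring]
    refine count_factor_TM_two_mul_add_one ?_ a
    rw [show 2 * (q + 2 ^ t * (m * j)) + 2 * (2 ^ t * m) = 2 * (q + 2 ^ t * (m * (j + 1))) by ring,
      TM_two_mul, TM_two_mul, TM_add_two_pow_mul hq, TM_add_two_pow_mul hq, hm]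

lemma abelianPowerAt_TM {i t m k : ℕ} (hi : i < 2 ^ t) (hm₀ : 0 < m)
    (hm : ∀ j ≤ k, TM (m * j) = 0) : AbelianPowerAt TM i k (2 * (2 ^ t * m)) := by
  have hblock {j : ℕ} (hj : j < k) (a : Fin 2) := count_factor_TM_block hi
    ((hm (j + 1) hj).trans (hm j hj.le).symm) a
  exact ⟨by positivity, fun j₁ j₂ h₁ h₂ a => by rw [hblock h₁, hblock h₂]⟩

/-- Each suffix of the Thue-Morse word begins in an abelian 6-power. -/
theorem thueMorse_suffixes_begin_in_abelian_six_power (i : ℕ) :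
    ∃ ℓ : ℕ, AbelianPowerAt TM i 6 ℓ :=
  ⟨_, abelianPowerAt_TM Nat.lt_two_pow_self three_pos TM_three_mul_eq_zero⟩
end
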